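/- arXiv:1106.5575 — 4 statements merged into one kernel-verified Lean document; each statement's English description precedes it below -/
import Mathlib

section
/- For every ε > 0 the function x ↦ (x − iε)^{−2} is (absolutely) integrable on ℝ, and for every k ∈ ℝ: ∫_ℝ e^{−ikx} (x − iε)^{−2} dx = 2π k e^{εk} if k ≤ 0, and = 0 if k > 0. -/
/-!
The one-sided function `g(ξ) = ξ₊ e^{-aξ}` (`a > 0`) has Fourier transform `(a + 2πix)⁻²`,
by the Laplace transform `∫₀^∞ t e^{-ct} dt = c⁻²`. For `a = 2πε` this is
`-(4π²)⁻¹ (x - iε)⁻²`, so `(x - iε)⁻²` is, up to the factor `-4π²`, the Fourier transform of a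
continuous integrable function with integrable transform. Fourier inversion then gives
`𝓕 (x ↦ (x - iε)⁻²)(ξ) = -4π² g(-ξ)`, and the integral in question is this transform at
`ξ = k / 2π`; it vanishes for `k > 0` because `g` is supported on `[0, ∞)`.
-/

open MeasureTheory Complex Set Filter
open scoped FourierTransform Real

section LaplaceTransform

variable {c : ℂ}

lemma integrableOn_Ioi_cexp_neg_mul (hc : 0 < c.re) :
    IntegrableOn (fun t : ℝ => cexp (-c * t)) (Ioi 0) :=
  integrableOn_exp_mul_complex_Ioi (by simpa using hc) 0

lemma integrableOn_Ioi_mul_cexp_neg_mul (hc : 0 < c.re) :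
    IntegrableOn (fun t : ℝ => (t : ℂ) * cexp (-c * t)) (Ioi 0) := by
  have hreal : IntegrableOn (fun t : ℝ => t * Real.exp (-c.re * t)) (Ioi 0) := by
    simpa using integrableOn_rpow_mul_exp_neg_mul_rpow (s := 1) (p := 1) (by norm_num) one_pos hc
  refine hreal.mono' (by fun_prop : Continuous _).aestronglyMeasurable ?_
  filter_upwards [ae_restrict_mem measurableSet_Ioi] with t (ht : 0 < t)
  simp [norm_exp, abs_of_pos ht]

lemma integral_Ioi_mul_cexp_neg_mul (hc : 0 < c.re) :
    ∫ t in Ioi (0 : ℝ), (t : ℂ) * cexp (-c * t) = (c ^ 2)⁻¹ := by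
  have hc0 : c ≠ 0 := by rintro rfl; simp at hc
  let F : ℝ → ℂ := fun t => -(c⁻¹ * (t * cexp (-c * t)) + (c ^ 2)⁻¹ * cexp (-c * t))
  have hF : ∀ t : ℝ, HasDerivAt F (t * cexp (-c * t)) t := by
    intro t
    have hexp : HasDerivAt (fun z : ℂ => cexp (-c * z)) (cexp (-c * t) * -c) t := by
      simpa using ((hasDerivAt_id (t : ℂ)).const_mul (-c)).cexp
    have hG : HasDerivAt (fun z : ℂ => -(c⁻¹ * (z * cexp (-c * z)) + (c ^ 2)⁻¹ * cexp (-c * z)))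
        (t * cexp (-c * t)) t := by
      refine (((hasDerivAt_id' (t : ℂ)).mul hexp).const_mul c⁻¹
        |>.add (hexp.const_mul (c ^ 2)⁻¹)).neg.congr_deriv ?_
      field_simp
      ring
    exact hG.comp_ofReal
  have hF_int : IntegrableOn F (Ioi 0) :=
    (((integrableOn_Ioi_mul_cexp_neg_mul hc).const_mul c⁻¹).add
      ((integrableOn_Ioi_cexp_neg_mul hc).const_mul _)).neg
  have hF_lim := tendsto_zero_of_hasDerivAt_of_integrableOn_Ioi (fun t _ => hF t)
    (integrableOn_Ioi_mul_cexp_neg_mul hc) hF_int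
  rw [integral_Ioi_of_hasDerivAt_of_tendsto (hF 0).continuousAt.continuousWithinAt
    (fun t _ => hF t) (integrableOn_Ioi_mul_cexp_neg_mul hc) hF_lim]
  simp [F]

end LaplaceTransform

section Ramp

variable {a : ℝ}

noncomputable def rampExp (a ξ : ℝ) : ℂ := (max ξ 0 : ℝ) * cexp (-a * ξ)

lemma continuous_rampExp (a : ℝ) : Continuous (rampExp a) := by
  unfold rampExp
  fun_prop

lemma rampExp_of_nonneg {ξ : ℝ} (hξ : 0 ≤ ξ) : rampExp a ξ = ξ * cexp (-a * ξ) := by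
  simp [rampExp, max_eq_left hξ]

lemma rampExp_of_nonpos {ξ : ℝ} (hξ : ξ ≤ 0) : rampExp a ξ = 0 := by
  simp [rampExp, max_eq_right hξ]

lemma rampExp_eq_indicator (a : ℝ) :
    rampExp a = (Ioi 0).indicator (fun ξ : ℝ => (ξ : ℂ) * cexp (-a * ξ)) := by
  ext ξ
  rcases lt_or_ge 0 ξ with hξ | hξ
  · rw [indicator_of_mem (mem_Ioi.2 hξ), rampExp_of_nonneg hξ.le]
  · rw [indicator_of_notMem (notMem_Ioi.2 hξ), rampExp_of_nonpos hξ]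

lemma integrable_rampExp (ha : 0 < a) : Integrable (rampExp a) := by
  rw [rampExp_eq_indicator, integrable_indicator_iff measurableSet_Ioi]
  exact integrableOn_Ioi_mul_cexp_neg_mul (by simpa using ha)

lemma fourier_rampExp (ha : 0 < a) (x : ℝ) :
    𝓕 (rampExp a) x = ((a + 2 * π * I * x) ^ 2)⁻¹ := by
  have hc : 0 < (a + 2 * π * I * x : ℂ).re := by simpa using ha
  rw [Real.fourier_real_eq_integral_exp_smul, rampExp_eq_indicator]
  simp_rw [← indicator_smul_apply (Ioi 0) (fun v : ℝ => cexp (↑(-2 * π * v * x) * I))]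
  rw [integral_indicator measurableSet_Ioi, ← integral_Ioi_mul_cexp_neg_mul hc]
  refine setIntegral_congr_fun measurableSet_Ioi fun ξ _ => ?_
  rw [smul_eq_mul, mul_left_comm, ← Complex.exp_add]
  push_cast
  congr 2
  ring

end Ramp

lemma fourier_fourier_apply {V E : Type*} [NormedAddCommGroup V] [InnerProductSpace ℝ V]
    [FiniteDimensional ℝ V] [MeasurableSpace V] [BorelSpace V]
    [NormedAddCommGroup E] [NormedSpace ℂ E] [CompleteSpace E]
    {f : V → E} (hc : Continuous f) (hf : Integrable f) (hFf : Integrable (𝓕 f)) (v : V) :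
    𝓕 (𝓕 f) v = f (-v) := by
  rw [← neg_neg v, ← Real.fourierInv_eq_fourier_neg, hc.fourierInv_fourier_eq hf hFf, neg_neg]

lemma fourier_const_mul {V : Type*} [NormedAddCommGroup V] [InnerProductSpace ℝ V]
    [FiniteDimensional ℝ V] [MeasurableSpace V] [BorelSpace V] (c : ℂ) (f : V → ℂ) (w : V) :
    𝓕 (fun v => c * f v) w = c * 𝓕 f w := by
  simp_rw [Real.fourier_eq', smul_eq_mul, mul_left_comm _ c, integral_const_mul]

lemma integral_cexp_neg_I_mul_mul_eq_fourier (f : ℝ → ℂ) (k : ℝ) :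
    ∫ x : ℝ, cexp (-I * k * x) * f x = 𝓕 f (k / (2 * π)) := by
  rw [Real.fourier_real_eq_integral_exp_smul]
  congr 1 with x
  rw [smul_eq_mul]
  congr 2
  push_cast
  field_simp

section ShiftedInvSq

variable {ε : ℝ}

lemma ofReal_sub_mul_I_ne_zero (hε : ε ≠ 0) (x : ℝ) : (x : ℂ) - ε * I ≠ 0 := by
  intro h
  simpa [hε] using congrArg im h

lemma integrable_inv_ofReal_sub_mul_I_sq (hε : ε ≠ 0) :
    Integrable (fun x : ℝ => (((x : ℂ) - ε * I) ^ 2)⁻¹) := by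
  have hbound : Integrable (fun x : ℝ => ε⁻¹ * ε⁻¹ * (1 + (x / ε) ^ 2)⁻¹) :=
    (integrable_inv_one_add_sq.comp_div hε).const_mul _
  refine hbound.mono' (Continuous.aestronglyMeasurable ?_) (Eventually.of_forall fun x => ?_)
  · exact .inv₀ (by fun_prop) fun x => pow_ne_zero 2 (ofReal_sub_mul_I_ne_zero hε x)
  · rw [norm_inv, norm_pow, Complex.sq_norm, normSq_apply]
    simp
    field_simp
    linarith

lemma inv_ofReal_sub_mul_I_sq_eq_fourier_rampExp (hε : 0 < ε) (x : ℝ) :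
    (((x : ℂ) - ε * I) ^ 2)⁻¹ = -4 * π ^ 2 * 𝓕 (rampExp (2 * π * ε)) x := by
  rw [fourier_rampExp (by positivity), show ((2 * π * ε : ℝ) : ℂ) + 2 * π * I * x
    = 2 * π * I * (x - ε * I) by push_cast; linear_combination (2 * π * ε : ℂ) * I_sq]
  field_simp
  rw [I_sq]
  ring

lemma fourier_inv_ofReal_sub_mul_I_sq (hε : 0 < ε) (ξ : ℝ) :
    𝓕 (fun x : ℝ => (((x : ℂ) - ε * I) ^ 2)⁻¹) ξ = -4 * π ^ 2 * rampExp (2 * π * ε) (-ξ) := by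
  have ha : 0 < 2 * π * ε := by positivity
  have hFg_int : Integrable (𝓕 (rampExp (2 * π * ε))) := by
    refine ((integrable_inv_ofReal_sub_mul_I_sq hε.ne').const_mul (-4 * π ^ 2 : ℂ)⁻¹).congr
      (Eventually.of_forall fun x => ?_)
    simp only [inv_ofReal_sub_mul_I_sq_eq_fourier_rampExp hε x]
    field_simp
  simp_rw [inv_ofReal_sub_mul_I_sq_eq_fourier_rampExp hε]
  rw [fourier_const_mul,
    fourier_fourier_apply (continuous_rampExp _) (integrable_rampExp ha) hFg_int]

end ShiftedInvSq

/-- For `ε > 0` the function `x ↦ (x − iε)⁻²` is integrable on `ℝ`, and its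
Fourier transform is `∫ e^{−ikx}(x − iε)⁻² dx = 2πk e^{εk}` for `k ≤ 0` and
`0` for `k > 0`. -/
theorem fourier_transform_inv_sq_shifted (ε : ℝ) (hε : 0 < ε) :
    Integrable (fun x : ℝ => (((x : ℂ) - ε * Complex.I) ^ 2)⁻¹) ∧
    ∀ k : ℝ,
      (∫ x : ℝ, Complex.exp (-Complex.I * k * x) * (((x : ℂ) - ε * Complex.I) ^ 2)⁻¹) =
        if k ≤ 0 then 2 * Real.pi * k * Real.exp (ε * k) else 0 := by
  refine ⟨integrable_inv_ofReal_sub_mul_I_sq hε.ne', fun k => ?_⟩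
  rw [integral_cexp_neg_I_mul_mul_eq_fourier, fourier_inv_ofReal_sub_mul_I_sq hε]
  split_ifs with hk
  · rw [rampExp_of_nonneg (neg_nonneg.2 (div_nonpos_of_nonpos_of_nonneg hk (by positivity)))]
    push_cast
    field_simp
    ring
  · rw [rampExp_of_nonpos (neg_nonpos.2 (div_nonneg (not_le.1 hk).le (by positivity))), mul_zero,
      ofReal_zero]
end

section
/- Let f, h : ℝ → ℂ be Schwartz functions and let ε > 0. Then ∫_ℝ ∫_ℝ f(u) h(u') (u − u' − iε)^{−2} du' du = ∫_{−∞}^{0} k e^{εk} f̂(−k) ĥ(k) dk. -/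
open MeasureTheory Complex

/-- The Fourier transform `f̂(k) = ∫ f(u) e^{−iku} du` of an (integrable)
function `f : ℝ → ℂ`. -/
noncomputable def ft (f : ℝ → ℂ) (k : ℝ) : ℂ :=
  ∫ u : ℝ, f u * Complex.exp (-Complex.I * k * u)

/-!
For `0 < Re s` one has `∫_{-∞}^0 k e^{sk} dk = -s⁻²`. Taking `s = ε + i(u - u')` writes
`(u - u' - iε)⁻²` as a superposition of the plane waves `e^{ik(u-u')}`, `k < 0`, with weight
`k e^{εk}`. Substituting this into the double integral and exchanging the `k`-integral with the
`(u, u')`-integral (legitimate since `k e^{εk}` is integrable on `(-∞, 0)` and `f, h ∈ L¹`), the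
`(u, u')`-integral factorises into `f̂(-k) ĥ(k)`.
-/

open Set Filter

lemma integrableOn_mul_exp_mul_complex_Iic {s : ℂ} (hs : 0 < s.re) :
    IntegrableOn (fun k : ℝ => (k : ℂ) * cexp (s * k)) (Iic 0) := by
  have hexp : IntegrableOn (fun k : ℝ => cexp (s / 2 * k)) (Iic 0) :=
    integrableOn_exp_mul_complex_Iic (by simpa using hs) 0
  have hbound : ∀ᵐ k : ℝ ∂volume.restrict (Iic 0),
      ‖(k : ℂ) * cexp (s / 2 * k)‖ ≤ 2 / s.re := by
    filter_upwards [ae_restrict_mem measurableSet_Iic] with k (hk : k ≤ 0)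
    -- `x e⁻ˣ ≤ 1` at `x = -(s.re / 2) k`, from `x + 1 ≤ eˣ`
    have key : -(s.re / 2 * k) * Real.exp (s.re / 2 * k) ≤ 1 := by
      have := mul_le_mul_of_nonneg_right (Real.add_one_le_exp (-(s.re / 2 * k)))
        (Real.exp_pos (s.re / 2 * k)).le
      rw [← Real.exp_add, neg_add_cancel, Real.exp_zero] at this
      nlinarith [Real.exp_pos (s.re / 2 * k)]
    rw [norm_mul, norm_real, Real.norm_of_nonpos hk, norm_exp, le_div_iff₀ hs]
    simp only [div_ofNat_re, mul_re, ofReal_re, ofReal_im, mul_zero, sub_zero]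
    linarith
  refine IntegrableOn.congr_fun (hexp.bdd_mul (by fun_prop) hbound) (fun k _ => ?_)
    measurableSet_Iic
  rw [mul_assoc, ← Complex.exp_add]
  ring_nf

lemma integral_mul_exp_mul_complex_Iic {s : ℂ} (hs : 0 < s.re) :
    ∫ k : ℝ in Iic 0, (k : ℂ) * cexp (s * k) = -(s ^ 2)⁻¹ := by
  have hs0 : s ≠ 0 := fun h => by simp [h] at hs
  set G : ℝ → ℂ := fun k => (k / s - 1 / s ^ 2) * cexp (s * k)
  have hG : ∀ k ∈ Iic (0 : ℝ), HasDerivAt G ((k : ℂ) * cexp (s * k)) k := by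
    intro k _
    refine ((((hasDerivAt_id k).ofReal_comp.div_const s).sub_const (1 / s ^ 2)).mul
      ((hasDerivAt_id k).ofReal_comp.const_mul s).cexp).congr_deriv ?_
    simp only [id, ofReal_one]
    field_simp
    ring
  have hint := integrableOn_mul_exp_mul_complex_Iic hs
  have hGint : IntegrableOn G (Iic 0) := by
    refine IntegrableOn.congr_fun ((hint.const_mul s⁻¹).sub
      ((integrableOn_exp_mul_complex_Iic hs 0).const_mul (1 / s ^ 2))) (fun k _ => ?_)
      measurableSet_Iic
    simp only [G, Pi.sub_apply]
    ring
  rw [integral_Iic_of_hasDerivAt_of_tendsto' hG hint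
    (tendsto_zero_of_hasDerivAt_of_integrableOn_Iic hG hint hGint)]
  simp [G]

lemma integral_Iio_mul_exp_mul_cexp_eq_inv_sq {ε : ℝ} (hε : 0 < ε) (x : ℝ) :
    ∫ k : ℝ in Iio 0, (k : ℂ) * Real.exp (ε * k) * cexp (I * k * x) =
      (((x : ℂ) - ε * I) ^ 2)⁻¹ := by
  have hs : 0 < ((ε : ℂ) + I * x).re := by simpa using hε
  calc ∫ k : ℝ in Iio 0, (k : ℂ) * Real.exp (ε * k) * cexp (I * k * x)
      = ∫ k : ℝ in Iic 0, (k : ℂ) * cexp ((ε + I * x) * k) := by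
        rw [integral_Iic_eq_integral_Iio]
        refine setIntegral_congr_fun measurableSet_Iio fun k _ => ?_
        rw [ofReal_exp, mul_assoc, ← Complex.exp_add]
        push_cast
        ring_nf
    _ = (((x : ℂ) - ε * I) ^ 2)⁻¹ := by
        rw [integral_mul_exp_mul_complex_Iic hs, ← inv_neg]
        congr 1
        linear_combination (-(x : ℂ) ^ 2 - (ε : ℂ) ^ 2) * I_sq

lemma ft_neg_mul_ft (f g : ℝ → ℂ) (k : ℝ) :
    ft f (-k) * ft g k = ∫ p : ℝ × ℝ, f p.1 * g p.2 * cexp (I * k * (p.1 - p.2)) := by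
  rw [ft, ft, ← integral_prod_mul]
  refine integral_congr_ae (Eventually.of_forall fun p => ?_)
  simp only
  rw [mul_mul_mul_comm, ← Complex.exp_add]
  push_cast
  ring_nf

noncomputable def twoPointModeIntegrand (ε : ℝ) (f g : ℝ → ℂ) (k : ℝ) (p : ℝ × ℝ) : ℂ :=
  (k : ℂ) * Real.exp (ε * k) * (f p.1 * g p.2 * cexp (I * k * (p.1 - p.2)))

section twoPointModeIntegrand

variable {ε : ℝ} {f g : ℝ → ℂ}

lemma integrable_uncurry_twoPointModeIntegrand (hε : 0 < ε) (hf : Integrable f)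
    (hg : Integrable g) :
    Integrable (Function.uncurry (twoPointModeIntegrand ε f g))
      ((volume.restrict (Iio 0)).prod volume) := by
  have hw : IntegrableOn (fun k : ℝ => (k : ℂ) * Real.exp (ε * k)) (Iio 0) := by
    refine ((integrableOn_mul_exp_mul_complex_Iic (s := ε) (by simpa using hε)).mono_set
      Iio_subset_Iic_self).congr_fun (fun k _ => ?_) measurableSet_Iio
    push_cast
    ring_nf
  have hphase : ∀ᵐ q : ℝ × ℝ × ℝ ∂(volume.restrict (Iio 0)).prod volume,
      ‖cexp (I * q.1 * (q.2.1 - q.2.2))‖ ≤ 1 :=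
    Eventually.of_forall fun q => by simp [norm_exp]
  refine ((hw.mul_prod (hf.mul_prod hg)).mul_bdd (by fun_prop) hphase).congr
    (Eventually.of_forall fun q => ?_)
  simp only [Function.uncurry, twoPointModeIntegrand]
  ring

lemma integral_Iio_twoPointModeIntegrand (hε : 0 < ε) (p : ℝ × ℝ) :
    ∫ k : ℝ in Iio 0, twoPointModeIntegrand ε f g k p =
      f p.1 * g p.2 * (((p.1 : ℂ) - p.2 - ε * I) ^ 2)⁻¹ := by
  simp only [twoPointModeIntegrand, mul_left_comm _ (f p.1 * g p.2)]
  rw [integral_const_mul, ← ofReal_sub, integral_Iio_mul_exp_mul_cexp_eq_inv_sq hε, ofReal_sub]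

lemma integral_twoPointModeIntegrand (k : ℝ) :
    ∫ p : ℝ × ℝ, twoPointModeIntegrand ε f g k p =
      (k : ℂ) * Real.exp (ε * k) * ft f (-k) * ft g k := by
  rw [mul_assoc _ (ft f _), ft_neg_mul_ft, ← integral_const_mul]
  rfl

end twoPointModeIntegrand

/-- Fourier-space rewriting of the regularized boundary two-point function:
for Schwartz `f, h` and `ε > 0`,
`∬ f(u) h(u') (u − u' − iε)⁻² du' du = ∫_{−∞}^0 k e^{εk} f̂(−k) ĥ(k) dk`. -/
theorem regularized_two_point_mode_expansion (f h : SchwartzMap ℝ ℂ) (ε : ℝ) (hε : 0 < ε) :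
    (∫ u : ℝ, ∫ u' : ℝ, f u * h u' * (((u : ℂ) - (u' : ℂ) - ε * Complex.I) ^ 2)⁻¹) =
      ∫ k in Set.Iio (0 : ℝ),
        (k : ℂ) * Real.exp (ε * k) * ft (fun u => f u) (-k) * ft (fun u => h u) k := by
  have hΦ := integrable_uncurry_twoPointModeIntegrand hε f.integrable h.integrable
  have hL := hΦ.integral_prod_right
  simp only [Function.uncurry_apply_pair, integral_Iio_twoPointModeIntegrand hε] at hL
  calc (∫ u : ℝ, ∫ u' : ℝ, f u * h u' * (((u : ℂ) - (u' : ℂ) - ε * Complex.I) ^ 2)⁻¹)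
      = ∫ p : ℝ × ℝ, f p.1 * h p.2 * (((p.1 : ℂ) - p.2 - ε * I) ^ 2)⁻¹ :=
        (integral_prod _ hL).symm
    _ = ∫ p : ℝ × ℝ, ∫ k : ℝ in Iio 0, twoPointModeIntegrand ε f h k p := by
        simp only [integral_Iio_twoPointModeIntegrand hε]
    _ = ∫ k : ℝ in Iio 0, ∫ p : ℝ × ℝ, twoPointModeIntegrand ε f h k p :=
        (integral_integral_swap hΦ).symm
    _ = _ := by simp only [integral_twoPointModeIntegrand]
end

section
/- Let f, h : ℝ → ℂ be Schwartz functions. Then the limit lim_{ε→0⁺} −(1/π) ∫_ℝ ∫_ℝ f(u) h(u') (u − u' − iε)^{−2} du' du exists and equals (1/π) ∫_{0}^{∞} k f̂(k) ĥ(−k) dk. -/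
/-!
For `ε > 0` the regularized kernel is a Laplace transform,
`(x - iε)⁻² = -∫₀^∞ k e^{-(ε + i x) k} dk`. Inserting it and exchanging the order of
integration (absolutely convergent thanks to the damping `e^{-ε k}`) turns the double integral
into `-∫₀^∞ e^{-ε k} k f̂(k) ĥ(-k) dk`. Since `f̂` is again Schwartz and `ĥ` is bounded,
`k f̂(k) ĥ(-k)` is integrable, and dominated convergence removes the damping as `ε → 0⁺`.
-/

open MeasureTheory Complex Filter

open Set Topology FourierTransform

lemma integrableOn_abs_mul_exp_neg_mul_Ioi {b : ℝ} (hb : 0 < b) :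
    IntegrableOn (fun k : ℝ => |k| * Real.exp (-(b * k))) (Ioi 0) := by
  refine (integrableOn_rpow_mul_exp_neg_mul_rpow (p := 1) (s := 1) (by norm_num) zero_lt_one
    hb).congr_fun (fun k hk => ?_) measurableSet_Ioi
  simp [abs_of_pos (mem_Ioi.mp hk)]

lemma norm_ofReal_mul_cexp_neg_mul (a : ℂ) (k : ℝ) :
    ‖(k : ℂ) * cexp (-(a * k))‖ = |k| * Real.exp (-(a.re * k)) := by
  simp [Complex.norm_exp]

lemma integrableOn_ofReal_mul_cexp_neg_mul_Ioi {a : ℂ} (ha : 0 < a.re) :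
    IntegrableOn (fun k : ℝ => (k : ℂ) * cexp (-(a * k))) (Ioi 0) :=
  (integrableOn_abs_mul_exp_neg_mul_Ioi ha).mono' (by fun_prop)
    (ae_of_all _ fun k => (norm_ofReal_mul_cexp_neg_mul a k).le)

lemma tendsto_cexp_neg_mul_atTop {a : ℂ} (ha : 0 < a.re) :
    Tendsto (fun k : ℝ => cexp (-(a * k))) atTop (𝓝 0) := by
  rw [tendsto_zero_iff_norm_tendsto_zero]
  refine (Real.tendsto_exp_atBot.comp
    (tendsto_neg_atTop_atBot.comp (tendsto_id.const_mul_atTop ha))).congr fun k => ?_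
  simp [Complex.norm_exp]

lemma tendsto_ofReal_mul_cexp_neg_mul_atTop {a : ℂ} (ha : 0 < a.re) :
    Tendsto (fun k : ℝ => (k : ℂ) * cexp (-(a * k))) atTop (𝓝 0) := by
  rw [tendsto_zero_iff_norm_tendsto_zero]
  refine (tendsto_rpow_mul_exp_neg_mul_atTop_nhds_zero 1 a.re ha).congr' ?_
  filter_upwards [eventually_ge_atTop 0] with k hk
  rw [norm_ofReal_mul_cexp_neg_mul, abs_of_nonneg hk, Real.rpow_one, neg_mul]

lemma integral_ofReal_mul_cexp_neg_mul_Ioi {a : ℂ} (ha : 0 < a.re) :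
    ∫ k in Ioi (0 : ℝ), (k : ℂ) * cexp (-(a * k)) = (a ^ 2)⁻¹ := by
  have ha0 : a ≠ 0 := fun h => by simp [h] at ha
  let F : ℝ → ℂ := fun k => -(a * k * cexp (-(a * k)) + cexp (-(a * k))) / a ^ 2
  have hF : ∀ k : ℝ, HasDerivAt F ((k : ℂ) * cexp (-(a * k))) k := by
    intro k
    have he : HasDerivAt (fun x : ℝ => cexp (-(a * x))) (-a * cexp (-(a * k))) k := by
      simpa [mul_comm] using ((hasDerivAt_id (k : ℂ)).const_mul a).neg.cexp.comp_ofReal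
    have hk : HasDerivAt (fun x : ℝ => a * (x : ℂ)) a k := by
      simpa using ((hasDerivAt_id (k : ℂ)).const_mul a).comp_ofReal
    refine (((hk.mul he).add he).neg.div_const (a ^ 2)).congr_deriv ?_
    field_simp
    ring
  have hF_atTop : Tendsto F atTop (𝓝 0) := by
    simpa [F, mul_assoc] using (((tendsto_ofReal_mul_cexp_neg_mul_atTop ha).const_mul a).add
      (tendsto_cexp_neg_mul_atTop ha)).neg.div_const (a ^ 2)
  rw [integral_Ioi_of_hasDerivAt_of_tendsto (hF 0).continuousAt.continuousWithinAt
    (fun k _ => hF k) (integrableOn_ofReal_mul_cexp_neg_mul_Ioi ha) hF_atTop]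
  simp [F]
  ring

lemma inv_sq_sub_mul_I_eq_neg_integral {ε : ℝ} (hε : 0 < ε) (x : ℝ) :
    (((x : ℂ) - ε * I) ^ 2)⁻¹ =
      -∫ k in Ioi (0 : ℝ), (k : ℂ) * cexp (-((ε + x * I) * k)) := by
  rw [integral_ofReal_mul_cexp_neg_mul_Ioi (by simpa using hε), ← inv_neg]
  congr 1
  linear_combination ((x : ℂ) ^ 2 + ε ^ 2) * I_sq

lemma norm_ft_le (g : ℝ → ℂ) (k : ℝ) : ‖ft g k‖ ≤ ∫ u, ‖g u‖ :=
  (norm_integral_le_integral_norm _).trans_eq <| by simp [Complex.norm_exp]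

lemma continuous_ft {g : ℝ → ℂ} (hg : Integrable g) : Continuous (ft g) :=
  continuous_of_dominated (fun k => by fun_prop) (fun k => ae_of_all _ fun u => by
    simp [Complex.norm_exp]) hg.norm (ae_of_all _ fun u => by fun_prop)

lemma ft_eq_fourier (g : ℝ → ℂ) (k : ℝ) : ft g k = 𝓕 g (k / (2 * Real.pi)) := by
  rw [Real.fourier_real_eq_integral_exp_smul, ft]
  congr 1 with u
  rw [smul_eq_mul, mul_comm]
  congr 2
  push_cast
  field_simp

lemma integrable_ofReal_mul_ft (f : SchwartzMap ℝ ℂ) :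
    Integrable fun k : ℝ => (k : ℂ) * ft f k := by
  have h := ((𝓕 f).integrable_pow_mul volume 1).comp_div (by positivity : 2 * Real.pi ≠ 0)
  refine (h.const_mul (2 * Real.pi)).mono'
    (continuous_ofReal.mul (continuous_ft f.integrable)).aestronglyMeasurable
    (ae_of_all _ fun k => le_of_eq ?_)
  rw [norm_mul, ft_eq_fourier, ← SchwartzMap.fourier_coe, pow_one, norm_div, norm_real,
    Real.norm_of_nonneg Real.two_pi_pos.le]
  field_simp

lemma integrable_ofReal_mul_ft_mul_ft (f : SchwartzMap ℝ ℂ) {h : ℝ → ℂ} (hh : Integrable h) :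
    Integrable fun k : ℝ => (k : ℂ) * ft f k * ft h (-k) :=
  (integrable_ofReal_mul_ft f).mul_bdd
    ((continuous_ft hh).comp continuous_neg).aestronglyMeasurable
    (ae_of_all _ fun k => norm_ft_le h (-k))

lemma integral_mul_integral_comm {α β : Type*} [MeasurableSpace α] [MeasurableSpace β]
    {μ : Measure α} {ν : Measure β} [SFinite μ] [SFinite ν] {g : α → ℂ} {F : α → β → ℂ}
    {B : β → ℝ} (hg : Integrable g μ)
    (hF : AEStronglyMeasurable (Function.uncurry F) (μ.prod ν)) (hB : Integrable B ν)
    (hFB : ∀ a b, ‖F a b‖ ≤ B b) :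
    ∫ a, g a * ∫ b, F a b ∂ν ∂μ = ∫ b, ∫ a, g a * F a b ∂μ ∂ν := by
  simp_rw [← integral_const_mul]
  refine integral_integral_swap ((hg.norm.mul_prod hB).mono' (hg.1.comp_fst.mul hF)
    (ae_of_all _ fun p => ?_))
  simp only [Function.uncurry, norm_mul]
  exact mul_le_mul_of_nonneg_left (hFB _ _) (norm_nonneg _)

lemma integral_mul_inv_sq_sub_mul_I {h : ℝ → ℂ} (hh : Integrable h) {ε : ℝ} (hε : 0 < ε)
    (u : ℝ) :
    ∫ u' : ℝ, h u' * (((u : ℂ) - u' - ε * I) ^ 2)⁻¹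
      = -∫ k in Ioi (0 : ℝ), (k : ℂ) * cexp (-((ε + u * I) * k)) * ft h (-k) := by
  have hker := fun u' : ℝ => inv_sq_sub_mul_I_eq_neg_integral hε (u - u')
  push_cast at hker
  simp_rw [hker, mul_neg, integral_neg]
  rw [integral_mul_integral_comm hh (by fun_prop) (integrableOn_abs_mul_exp_neg_mul_Ioi hε)
    (fun _ k => by rw [norm_ofReal_mul_cexp_neg_mul]; simp)]
  congr 1
  refine setIntegral_congr_fun measurableSet_Ioi fun k _ => ?_
  simp only [ft, ← integral_const_mul]
  congr 1 with u'
  rw [show -((ε + (u - u' : ℂ) * I) * k) = -((ε + u * I) * k) + -I * ↑(-k) * u' by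
    push_cast; ring, Complex.exp_add]
  ring

lemma integral_integral_mul_inv_sq_sub_mul_I {f h : ℝ → ℂ} (hf : Integrable f)
    (hh : Integrable h) {ε : ℝ} (hε : 0 < ε) :
    ∫ u : ℝ, ∫ u' : ℝ, f u * h u' * (((u : ℂ) - u' - ε * I) ^ 2)⁻¹
      = -∫ k in Ioi (0 : ℝ), cexp (-(ε * k)) * ((k : ℂ) * ft f k * ft h (-k)) := by
  simp_rw [mul_assoc (f _), integral_const_mul, integral_mul_inv_sq_sub_mul_I hh hε, mul_neg,
    integral_neg]
  have hbound := (integrableOn_abs_mul_exp_neg_mul_Ioi hε).mul_const (∫ u, ‖h u‖)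
  have hmeas : Continuous fun p : ℝ × ℝ =>
      (p.2 : ℂ) * cexp (-((ε + p.1 * I) * p.2)) * ft h (-p.2) := by
    have := continuous_ft hh
    fun_prop
  rw [integral_mul_integral_comm hf hmeas.aestronglyMeasurable hbound (fun u k => ?_)]
  · congr 1
    refine setIntegral_congr_fun measurableSet_Ioi fun k _ => ?_
    calc ∫ u, f u * ((k : ℂ) * cexp (-((ε + u * I) * k)) * ft h (-k))
        = ∫ u, cexp (-(ε * k)) * k * ft h (-k) * (f u * cexp (-I * k * u)) := by
          congr 1 with u
          rw [show -((ε + u * I) * k) = -(ε * k) + -I * k * u by ring, Complex.exp_add]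
          ring
      _ = cexp (-(ε * k)) * ((k : ℂ) * ft f k * ft h (-k)) := by
          rw [integral_const_mul]
          simp only [ft]
          ring
  · rw [norm_mul, norm_ofReal_mul_cexp_neg_mul]
    simpa using mul_le_mul_of_nonneg_left (norm_ft_le h (-k)) (by positivity)

lemma tendsto_setIntegral_cexp_neg_mul_mul {φ : ℝ → ℂ} (hφ : IntegrableOn φ (Ioi 0)) :
    Tendsto (fun ε : ℝ => ∫ k in Ioi (0 : ℝ), cexp (-(ε * k)) * φ k) (𝓝[>] 0)
      (𝓝 (∫ k in Ioi (0 : ℝ), φ k)) := by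
  refine tendsto_integral_filter_of_dominated_convergence (fun k => ‖φ k‖)
    (Eventually.of_forall fun ε => (Continuous.aestronglyMeasurable (by fun_prop)).mul hφ.1)
    ?_ hφ.norm (ae_of_all _ fun k => ?_)
  · filter_upwards [self_mem_nhdsWithin] with ε (hε : 0 < ε)
    filter_upwards [ae_restrict_mem measurableSet_Ioi] with k (hk : 0 < k)
    rw [norm_mul, Complex.norm_exp]
    refine mul_le_of_le_one_left (norm_nonneg _) (Real.exp_le_one_iff.mpr ?_)
    simpa using (mul_pos hε hk).le
  · simpa using ((Continuous.tendsto (by fun_prop) 0).mono_left nhdsWithin_le_nhds :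
      Tendsto (fun ε : ℝ => cexp (-(ε * k)) * φ k) (𝓝[>] 0) _)

/-- The `ε → 0⁺` limit of the regularized boundary two-point function of
Schwartz functions exists and equals the mode expansion
`(1/π) ∫₀^∞ k f̂(k) ĥ(−k) dk`. -/
theorem boundary_two_point_limit (f h : SchwartzMap ℝ ℂ) :
    Tendsto
      (fun ε : ℝ =>
        -(1 / (Real.pi : ℂ)) *
          ∫ u : ℝ, ∫ u' : ℝ, f u * h u' * (((u : ℂ) - (u' : ℂ) - ε * Complex.I) ^ 2)⁻¹)
      (nhdsWithin 0 (Set.Ioi 0))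
      (nhds ((1 / (Real.pi : ℂ)) *
        ∫ k in Set.Ioi (0 : ℝ), (k : ℂ) * ft (fun u => f u) k * ft (fun u => h u) (-k))) := by
  have hlim := tendsto_setIntegral_cexp_neg_mul_mul
    (integrable_ofReal_mul_ft_mul_ft f h.integrable).integrableOn
  refine (hlim.const_mul (1 / (Real.pi : ℂ))).congr' ?_
  filter_upwards [self_mem_nhdsWithin] with ε (hε : 0 < ε)
  rw [integral_integral_mul_inv_sq_sub_mul_I f.integrable h.integrable hε]
  ring
end

section
/- Let T > 0 and let f, h : ℝ → ℂ be Schwartz functions. Then ∫_{ℝ∖{0}} (k e^{−k/T}/(1 − e^{−k/T})) f̂(k) ĥ(−k) dk = ∫_{ℝ∖{0}} (k/(1 − e^{−k/T})) ĥ(k) f̂(−k) dk, both integrals converging absolutely. -/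
/-!
The left weight is the Bose factor at `-k`: `k e^{-k/T}/(1 - e^{-k/T}) = B_T(-k)`, so the
substitution `k ↦ -k` carries the left integrand to the right one. Both converge absolutely
because `|B_T(k)| ≤ |k| + T` and, after rescaling `k ↦ k/2π`, the Fourier transform of a Schwartz
function is again a Schwartz function.
-/

open MeasureTheory Complex

open FourierTransform

-- `B_T(k)`; the junk value `boseFactor T 0 = 0` sits on a null set.
noncomputable def boseFactor (T k : ℝ) : ℝ := k / (1 - Real.exp (-k / T))

lemma boseFactor_neg (T k : ℝ) :
    boseFactor T (-k) = k * Real.exp (-k / T) / (1 - Real.exp (-k / T)) := by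
  have hprod : Real.exp (-k / T) * Real.exp (k / T) = 1 := by
    rw [← Real.exp_add, neg_div, neg_add_cancel, Real.exp_zero]
  unfold boseFactor
  rw [neg_neg]
  by_cases he : Real.exp (-k / T) = 1
  · have he' : Real.exp (k / T) = 1 := by simpa [he] using hprod
    simp [he, he']
  · have hd : 1 - Real.exp (-k / T) ≠ 0 := sub_ne_zero.2 (Ne.symm he)
    have hd' : 1 - Real.exp (k / T) ≠ 0 := by
      intro h0
      apply he
      simpa [show Real.exp (k / T) = 1 by linarith] using hprod
    rw [div_eq_div_iff hd' hd]
    linear_combination k * hprod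

lemma boseFactor_eq_add_boseFactor_neg {T : ℝ} (hT : 0 < T) (k : ℝ) :
    boseFactor T k = k + boseFactor T (-k) := by
  rcases eq_or_ne k 0 with rfl | hk
  · simp [boseFactor]
  have hd : 1 - Real.exp (-k / T) ≠ 0 := by
    rw [sub_ne_zero, ne_comm, Ne, Real.exp_eq_one_iff]
    exact div_ne_zero (neg_ne_zero.2 hk) hT.ne'
  rw [boseFactor_neg, boseFactor, div_eq_iff hd, add_mul, div_mul_cancel₀ _ hd]
  ring

lemma boseFactor_neg_mem_Icc {T k : ℝ} (hT : 0 < T) (hk : 0 < k) :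
    boseFactor T (-k) ∈ Set.Icc 0 T := by
  have hx : 0 < k / T := div_pos hk hT
  have hd : 0 < Real.exp (k / T) - 1 := by linarith [Real.add_one_lt_exp hx.ne']
  have heq : boseFactor T (-k) = k / (Real.exp (k / T) - 1) := by
    rw [boseFactor, neg_neg, ← neg_div_neg_eq, neg_neg, neg_sub]
  rw [heq]
  refine ⟨by positivity, (div_le_iff₀ hd).2 ?_⟩
  have := Real.add_one_le_exp (k / T)
  have : T * (k / T) = k := by field_simp
  nlinarith

lemma abs_boseFactor_le {T : ℝ} (hT : 0 < T) (k : ℝ) : |boseFactor T k| ≤ |k| + T := by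
  rcases lt_trichotomy k 0 with hk | rfl | hk
  · obtain ⟨h0, hT'⟩ := neg_neg k ▸ boseFactor_neg_mem_Icc hT (neg_pos.2 hk)
    rw [abs_of_nonneg h0]
    linarith [abs_nonneg k]
  · simp [boseFactor, hT.le]
  · obtain ⟨h0, hT'⟩ := boseFactor_neg_mem_Icc hT hk
    rw [boseFactor_eq_add_boseFactor_neg hT, abs_of_nonneg (by linarith), abs_of_pos hk]
    linarith

lemma measurable_boseFactor (T : ℝ) : Measurable (boseFactor T) := by
  unfold boseFactor
  fun_prop

lemma exists_schwartzMap_ft_eq (f : SchwartzMap ℝ ℂ) :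
    ∃ g : SchwartzMap ℝ ℂ, ft f = g := by
  have h2π : (2 * Real.pi)⁻¹ ≠ 0 := by positivity
  -- Mathlib's `𝓕` uses the kernel `e^{-2πixξ}`, so `ft f k = 𝓕 f (k / 2π)`.
  refine ⟨SchwartzMap.compCLMOfContinuousLinearEquiv ℂ
    (ContinuousLinearEquiv.unitsEquivAut ℝ (Units.mk0 _ h2π)) (𝓕 f), ?_⟩
  funext k
  simp only [SchwartzMap.compCLMOfContinuousLinearEquiv_apply, Function.comp_apply,
    ContinuousLinearEquiv.unitsEquivAut_apply, Units.val_mk0, SchwartzMap.fourier_coe,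
    Real.fourier_real_eq_integral_exp_smul, ft, smul_eq_mul]
  congr 1 with u
  rw [mul_comm]
  congr 2
  push_cast
  field_simp

lemma integrable_mul_mul_comp_neg {w : ℝ → ℝ} (hw : Measurable w) {c : ℝ}
    (hwb : ∀ k, |w k| ≤ |k| + c) (g₁ g₂ : SchwartzMap ℝ ℂ) :
    Integrable (fun k => (w k : ℂ) * g₁ k * g₂ (-k)) := by
  obtain ⟨C, -, hC⟩ := g₂.decay 0 0
  have hg₁ : Integrable (fun k : ℝ => (|k| + c) * ‖g₁ k‖) := by
    have hpow : Integrable (fun k : ℝ => |k| * ‖g₁ k‖) := by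
      simpa using g₁.integrable_pow_mul volume 1
    simp_rw [add_mul]
    exact hpow.add (g₁.integrable.norm.const_mul c)
  refine (hg₁.mul_const C).mono' (by fun_prop) (.of_forall fun k => ?_)
  have hg₂ : ‖g₂ (-k)‖ ≤ C := by simpa using hC (-k)
  rw [norm_mul, norm_mul, Complex.norm_real, Real.norm_eq_abs]
  gcongr
  · exact mul_nonneg ((abs_nonneg _).trans (hwb k)) (norm_nonneg _)
  · exact hwb k

/-- The KMS condition at temperature `T > 0` for the thermal boundary two-point
function of Schwartz functions `f, h`:
`∫ (k e^{−k/T}/(1 − e^{−k/T})) f̂(k) ĥ(−k) dk = ∫ (k/(1 − e^{−k/T})) ĥ(k) f̂(−k) dk`,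
both integrals converging absolutely. -/
theorem thermal_boundary_KMS (T : ℝ) (hT : 0 < T) (f h : SchwartzMap ℝ ℂ) :
    IntegrableOn
      (fun k : ℝ => ((k * Real.exp (-k / T) / (1 - Real.exp (-k / T)) : ℝ) : ℂ) *
        ft (fun u => f u) k * ft (fun u => h u) (-k)) {(0 : ℝ)}ᶜ ∧
    IntegrableOn
      (fun k : ℝ => ((k / (1 - Real.exp (-k / T)) : ℝ) : ℂ) *
        ft (fun u => h u) k * ft (fun u => f u) (-k)) {(0 : ℝ)}ᶜ ∧
    (∫ k in {(0 : ℝ)}ᶜ, ((k * Real.exp (-k / T) / (1 - Real.exp (-k / T)) : ℝ) : ℂ) *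
        ft (fun u => f u) k * ft (fun u => h u) (-k)) =
      ∫ k in {(0 : ℝ)}ᶜ, ((k / (1 - Real.exp (-k / T)) : ℝ) : ℂ) *
        ft (fun u => h u) k * ft (fun u => f u) (-k) := by
  obtain ⟨F, hF⟩ := exists_schwartzMap_ft_eq f
  obtain ⟨H, hH⟩ := exists_schwartzMap_ft_eq h
  simp only [IntegrableOn, restrict_compl_singleton, hF, hH, ← boseFactor_neg]
  refine ⟨integrable_mul_mul_comp_neg ((measurable_boseFactor T).comp measurable_neg)
      (fun k => abs_neg k ▸ abs_boseFactor_le hT (-k)) F H,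
    integrable_mul_mul_comp_neg (measurable_boseFactor T) (abs_boseFactor_le hT) H F, ?_⟩
  rw [← integral_neg_eq_self]
  congr 1 with k
  simp only [neg_neg, boseFactor]
  ring
end
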